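/- arXiv:2103.12980 — 2 statements merged into one kernel-verified Lean document; each statement's English description precedes it below -/
import Mathlib

section
/- Let n ≥ k ≥ 1 and let Y and Z be n×k real matrices. Then Y and Z are motion-equivalent (i.e., there exist an orthogonal k×k matrix Q with QᵀQ = Iₖ and a vector u ∈ ℝᵏ such that Z = Y·Q + 1ₙ·uᵀ) if and only if A_Z = A_Y, where A_Y = Y_norm·Y_normᵀ and Y_norm = (Iₙ − (1/n)·1ₙ·1ₙᵀ)·Y. (Paper's Theorem 2.1 (b) and (c): motion-group equivalent images map to the same ellipsoid, and two images mapping to the same ellipsoid are motion equivalent.) -/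
open Matrix
/-- The `n × n` centering matrix `Iₙ − (1/n)·1ₙ·1ₙᵀ`. -/
noncomputable def centerMat (n : ℕ) : Matrix (Fin n) (Fin n) ℝ :=
  1 - Matrix.of (fun _ _ => (n : ℝ)⁻¹)

/-- The centered matrix `Y_norm = (Iₙ − (1/n)·1ₙ·1ₙᵀ)·Y`. -/
noncomputable def normMat {n k : ℕ} (Y : Matrix (Fin n) (Fin k) ℝ) :
    Matrix (Fin n) (Fin k) ℝ :=
  centerMat n * Y

/-- `A_Y = Y_norm · Y_normᵀ`. -/
noncomputable def AMat {n k : ℕ} (Y : Matrix (Fin n) (Fin k) ℝ) :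
    Matrix (Fin n) (Fin n) ℝ :=
  normMat Y * (normMat Y)ᵀ

/-- The matrix `1ₙ · uᵀ` whose every row is `uᵀ`. -/
def transMat {n k : ℕ} (u : Fin k → ℝ) : Matrix (Fin n) (Fin k) ℝ :=
  Matrix.of (fun _ j => u j)

/-!
`A_Y` is the Gram matrix of the rows of `Y_norm`, and centering kills translations, so equivalent
matrices have the same `A`. Conversely, two families of vectors with the same Gram matrix differ by
a linear isometry of their span, which extends to an orthogonal map `Q` of the whole space; then
`Z − Y Q` is annihilated by centering, i.e. all its rows are equal.
-/

theorem exists_linearIsometry_comp_eq_of_norm_eq {𝕜 W V : Type*} [RCLike 𝕜] [AddCommGroup W]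
    [Module 𝕜 W] [NormedAddCommGroup V] [InnerProductSpace 𝕜 V] [FiniteDimensional 𝕜 V]
    (f g : W →ₗ[𝕜] V) (h : ∀ x, ‖f x‖ = ‖g x‖) :
    ∃ φ : V →ₗᵢ[𝕜] V, ∀ x, φ (f x) = g x := by
  have hker : LinearMap.ker f ≤ LinearMap.ker g := fun x hx ↦ by
    rw [LinearMap.mem_ker, ← norm_eq_zero, ← h, hx, norm_zero]
  let ψ : LinearMap.range f →ₗ[𝕜] V :=
    (LinearMap.ker f).liftQ g hker ∘ₗ f.quotKerEquivRange.symm.toLinearMap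
  have hψ (x : W) : ψ ⟨f x, LinearMap.mem_range_self f x⟩ = g x := by
    simp [ψ, LinearMap.quotKerEquivRange_symm_apply_image]
  let ψi : LinearMap.range f →ₗᵢ[𝕜] V := ⟨ψ, by rintro ⟨_, x, rfl⟩; rw [hψ, ← h]; rfl⟩
  exact ⟨ψi.extend, fun x ↦ (ψi.extend_apply ⟨f x, _⟩).trans (hψ x)⟩

theorem Matrix.norm_toEuclideanLin_conjTranspose_apply {𝕜 m n : Type*} [RCLike 𝕜] [Fintype m]
    [DecidableEq m] [Fintype n] [DecidableEq n] (A : Matrix m n 𝕜) (x : EuclideanSpace 𝕜 m) :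
    ‖toEuclideanLin Aᴴ x‖ = √(RCLike.re (inner 𝕜 x (toEuclideanLin (A * Aᴴ) x))) := by
  rw [@norm_eq_sqrt_re_inner 𝕜, toEuclideanLin_conjTranspose_eq_adjoint,
    LinearMap.adjoint_inner_left, ← toEuclideanLin_conjTranspose_eq_adjoint]
  simp [toLpLin_apply, mulVec_mulVec]

theorem Matrix.exists_mem_unitaryGroup_eq_mul_of_mul_conjTranspose_eq {𝕜 m n : Type*} [RCLike 𝕜]
    [Fintype m] [DecidableEq m] [Fintype n] [DecidableEq n] {B C : Matrix m n 𝕜}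
    (h : B * Bᴴ = C * Cᴴ) : ∃ U ∈ unitaryGroup n 𝕜, B = C * U := by
  obtain ⟨φ, hφ⟩ := exists_linearIsometry_comp_eq_of_norm_eq (toEuclideanLin Cᴴ)
    (toEuclideanLin Bᴴ) fun x ↦ by
      rw [norm_toEuclideanLin_conjTranspose_apply, norm_toEuclideanLin_conjTranspose_apply, h]
  set M := (toEuclideanCLM (𝕜 := 𝕜) (n := n)).symm φ.toContinuousLinearMap with hM_def
  have hM : M ∈ unitaryGroup n 𝕜 := mem_unitaryGroup_iff'.mpr <|
    EquivLike.injective (toEuclideanCLM (𝕜 := 𝕜) (n := n)) <| by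
      simp only [hM_def, map_mul, map_star, map_one, StarAlgEquiv.apply_symm_apply,
        ContinuousLinearMap.star_eq_adjoint]
      exact φ.toContinuousLinearMap.norm_map_iff_adjoint_comp_self.mp φ.norm_map
  have hBM : Bᴴ = M * Cᴴ := by
    apply toEuclideanLin.injective
    ext x : 1
    rw [← hφ, toLpLin_apply, toLpLin_apply, ← mulVec_mulVec, ← toEuclideanCLM_toLp, hM_def,
      StarAlgEquiv.apply_symm_apply]
    rfl
  refine ⟨star M, Unitary.star_mem hM, ?_⟩
  rw [← conjTranspose_conjTranspose B, hBM, conjTranspose_mul, conjTranspose_conjTranspose,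
    star_eq_conjTranspose]

section Centering

variable {n k l : ℕ}

theorem centerMat_mul (W : Matrix (Fin n) (Fin k) ℝ) :
    centerMat n * W = W - transMat (fun j ↦ (n : ℝ)⁻¹ * ∑ i, W i j) := by
  ext i j
  simp [centerMat, transMat, mul_apply, sub_mul, one_apply, Finset.mul_sum]

theorem centerMat_mul_transMat (u : Fin k → ℝ) :
    centerMat n * (transMat u : Matrix (Fin n) (Fin k) ℝ) = 0 := by
  ext i j
  have hn : (n : ℝ) ≠ 0 := Nat.cast_ne_zero.mpr i.pos.ne'
  simp [centerMat_mul, transMat, hn]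

theorem normMat_mul_add_transMat (Y : Matrix (Fin n) (Fin k) ℝ) (Q : Matrix (Fin k) (Fin l) ℝ)
    (u : Fin l → ℝ) : normMat (Y * Q + transMat u) = normMat Y * Q := by
  rw [normMat, Matrix.mul_add, centerMat_mul_transMat, add_zero, normMat, Matrix.mul_assoc]

theorem AMat_mul_add_transMat (Y : Matrix (Fin n) (Fin k) ℝ) {Q : Matrix (Fin k) (Fin l) ℝ}
    (hQ : Q * Qᵀ = 1) (u : Fin l → ℝ) : AMat (Y * Q + transMat u) = AMat Y := by
  rw [AMat, normMat_mul_add_transMat, transpose_mul, Matrix.mul_assoc, ← Matrix.mul_assoc Q, hQ,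
    Matrix.one_mul, AMat]

theorem exists_eq_mul_add_transMat_of_normMat_eq {Y : Matrix (Fin n) (Fin k) ℝ}
    {Z : Matrix (Fin n) (Fin l) ℝ} {Q : Matrix (Fin k) (Fin l) ℝ}
    (h : normMat Z = normMat Y * Q) : ∃ u, Z = Y * Q + transMat u := by
  have hW : centerMat n * (Z - Y * Q) = 0 := by
    rw [Matrix.mul_sub, ← Matrix.mul_assoc]
    exact sub_eq_zero.mpr h
  rw [centerMat_mul, sub_eq_zero] at hW
  exact ⟨_, sub_eq_iff_eq_add'.mp hW⟩

end Centering

theorem stmt0_general (n k : ℕ)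
    (Y Z : Matrix (Fin n) (Fin k) ℝ) :
    (∃ Q : Matrix (Fin k) (Fin k) ℝ, ∃ u : Fin k → ℝ,
      Qᵀ * Q = 1 ∧ Z = Y * Q + transMat u) ↔ AMat Z = AMat Y := by
  constructor
  · rintro ⟨Q, u, hQ, rfl⟩
    exact AMat_mul_add_transMat Y (mul_eq_one_comm.mp hQ) u
  · intro h
    obtain ⟨Q, hQ, hZ⟩ := exists_mem_unitaryGroup_eq_mul_of_mul_conjTranspose_eq
      (B := normMat Z) (C := normMat Y) (by simpa [AMat] using h)
    obtain ⟨u, rfl⟩ := exists_eq_mul_add_transMat_of_normMat_eq hZ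
    exact ⟨Q, u, (mem_orthogonalGroup_iff' _ _).mp hQ, rfl⟩

theorem stmt0 (n k : ℕ) (hk : 1 ≤ k) (hnk : k ≤ n)
    (Y Z : Matrix (Fin n) (Fin k) ℝ) :
    (∃ Q : Matrix (Fin k) (Fin k) ℝ, ∃ u : Fin k → ℝ,
      Qᵀ * Q = 1 ∧ Z = Y * Q + transMat u) ↔ AMat Z = AMat Y :=
  stmt0_general n k Y Z
end

section
/- Let Y and Z be n×k real matrices with Y_norm ≠ 0 and Z_norm ≠ 0. Then the following are equivalent: (i) Y and Z are similarity-equivalent, i.e., there exist a real number a > 0, a k×k matrix Q with QᵀQ = Iₖ, and u ∈ ℝᵏ with Z = a·Y·Q + 1ₙ·uᵀ; (ii) there exists c > 0 with A_Z = c·A_Y. (Paper's Theorem 2.3(b),(c): the class of images similarity-equivalent to Y corresponds exactly to the line of positive multiples of the ellipsoid E_Y.) -/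
/-!
Centering kills exactly the matrices `1ₙ · uᵀ`, so `Z = a • Y Q + 1ₙ uᵀ` for some `u` iff
`Z_norm = a • Y_norm Q`. Two matrices `A, B` with the same Gram matrix `A Aᵀ = B Bᵀ` differ
by an orthogonal factor `B = A Q`: the map `Aᵀ x ↦ Bᵀ x` is a well-defined isometry on the range
of `Aᵀ`, and it extends to an isometry of the whole space. Applied to `a • Y_norm` and `Z_norm`,
this gives the equivalence with `c = a²`.
-/

open Matrix

theorem LinearMap.exists_linearIsometry_comp_eq {𝕜 E F : Type*} [RCLike 𝕜] [AddCommGroup E]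
    [Module 𝕜 E] [NormedAddCommGroup F] [InnerProductSpace 𝕜 F] [FiniteDimensional 𝕜 F]
    (f g : E →ₗ[𝕜] F) (h : ∀ x, ‖f x‖ = ‖g x‖) : ∃ T : F →ₗᵢ[𝕜] F, ∀ x, T (f x) = g x := by
  have hker : ker f ≤ ker g := fun x hx => by
    rw [mem_ker, ← norm_eq_zero, ← h, norm_eq_zero]
    exact hx
  let L : range f →ₗ[𝕜] F := (ker f).liftQ g hker ∘ₗ f.quotKerEquivRange.symm.toLinearMap
  have hL : ∀ x, L ⟨f x, mem_range_self f x⟩ = g x := fun x => by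
    simp [L, quotKerEquivRange_symm_apply_image]
  let LI : range f →ₗᵢ[𝕜] F := ⟨L, by rintro ⟨_, x, rfl⟩; rw [hL]; exact (h x).symm⟩
  exact ⟨LI.extend, fun x => (LI.extend_apply ⟨f x, mem_range_self f x⟩).trans (hL x)⟩

namespace Matrix

variable {m k : Type*} [Fintype m] [Fintype k] [DecidableEq m]

theorem norm_toEuclideanLin_transpose_sq (A : Matrix m k ℝ) (x : EuclideanSpace ℝ m) :
    ‖toEuclideanLin Aᵀ x‖ ^ 2 = x.ofLp ⬝ᵥ (A * Aᵀ) *ᵥ x.ofLp := by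
  rw [← real_inner_self_eq_norm_sq, EuclideanSpace.inner_eq_star_dotProduct, ← mulVec_mulVec,
    dotProduct_mulVec, ← mulVec_transpose]
  simp [toLpLin_apply]

theorem exists_orthogonal_mul_eq_of_mul_transpose_eq [DecidableEq k] {A B : Matrix m k ℝ}
    (h : A * Aᵀ = B * Bᵀ) : ∃ Q : Matrix k k ℝ, Qᵀ * Q = 1 ∧ B = A * Q := by
  obtain ⟨T, hT⟩ := (toEuclideanLin Aᵀ).exists_linearIsometry_comp_eq (toEuclideanLin Bᵀ)
    fun x => by
      rw [← sq_eq_sq₀ (norm_nonneg _) (norm_nonneg _), norm_toEuclideanLin_transpose_sq,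
        norm_toEuclideanLin_transpose_sq, h]
  let P : Matrix k k ℝ := toEuclideanLin.symm T.toLinearMap
  have hPT : toEuclideanLin P = T.toLinearMap := toEuclideanLin.apply_symm_apply _
  have hP : Pᴴ * P = 1 := toEuclideanLin.injective <| by
    rw [toLpLin_mul_same, toEuclideanLin_conjTranspose_eq_adjoint, hPT, T.adjoint_comp_self',
      toLpLin_one]
  have hBP : Bᵀ = P * Aᵀ := toEuclideanLin.injective <| LinearMap.ext fun x => by
    rw [toLpLin_mul_same, LinearMap.comp_apply, hPT, ← hT]
    rfl
  refine ⟨Pᵀ, ?_, ?_⟩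
  · rw [transpose_transpose, mul_eq_one_comm, ← conjTranspose_eq_transpose_of_trivial]
    exact hP
  · rw [← transpose_transpose B, hBP, transpose_mul, transpose_transpose]

theorem exists_orthogonal_mul_eq_iff [DecidableEq k] (A B : Matrix m k ℝ) :
    (∃ Q : Matrix k k ℝ, Qᵀ * Q = 1 ∧ B = A * Q) ↔ A * Aᵀ = B * Bᵀ := by
  refine ⟨?_, exists_orthogonal_mul_eq_of_mul_transpose_eq⟩
  rintro ⟨Q, hQ, rfl⟩
  rw [transpose_mul, Matrix.mul_assoc, ← Matrix.mul_assoc Q, mul_eq_one_comm.mp hQ,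
    Matrix.one_mul]

end Matrix

section Centering

variable {n k : ℕ}

theorem normMat_apply (M : Matrix (Fin n) (Fin k) ℝ) (i : Fin n) (j : Fin k) :
    normMat M i j = M i j - (n : ℝ)⁻¹ * ∑ l, M l j := by
  simp only [normMat, centerMat, mul_apply, Matrix.sub_apply, of_apply, sub_mul,
    Finset.sum_sub_distrib, one_apply, ite_mul, one_mul, zero_mul, Finset.sum_ite_eq,
    Finset.mem_univ, if_true, Finset.mul_sum]

theorem normMat_sub (M N : Matrix (Fin n) (Fin k) ℝ) :
    normMat (M - N) = normMat M - normMat N :=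
  Matrix.mul_sub _ _ _

theorem normMat_transMat (u : Fin k → ℝ) :
    normMat (transMat u : Matrix (Fin n) (Fin k) ℝ) = 0 := by
  ext i j
  have : (n : ℝ) ≠ 0 := Nat.cast_ne_zero.mpr i.pos.ne'
  simp [normMat_apply, transMat, this]

theorem normMat_eq_zero_iff (M : Matrix (Fin n) (Fin k) ℝ) :
    normMat M = 0 ↔ ∃ u, M = transMat u := by
  refine ⟨fun h => ⟨fun j => (n : ℝ)⁻¹ * ∑ l, M l j, ?_⟩, ?_⟩
  · ext i j
    simpa [normMat_apply, transMat, sub_eq_zero] using congrFun (congrFun h i) j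
  · rintro ⟨u, rfl⟩
    exact normMat_transMat u

theorem exists_eq_add_transMat_iff (W Z : Matrix (Fin n) (Fin k) ℝ) :
    (∃ u, Z = W + transMat u) ↔ normMat Z = normMat W := by
  rw [← sub_eq_zero, ← normMat_sub, normMat_eq_zero_iff]
  simp only [sub_eq_iff_eq_add']

theorem normMat_smul_mul (a : ℝ) (Y : Matrix (Fin n) (Fin k) ℝ) (Q : Matrix (Fin k) (Fin k) ℝ) :
    normMat (a • (Y * Q)) = (a • normMat Y) * Q := by
  simp only [normMat, Matrix.mul_smul, Matrix.smul_mul, Matrix.mul_assoc]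

theorem smul_normMat_mul_transpose (a : ℝ) (Y : Matrix (Fin n) (Fin k) ℝ) :
    (a • normMat Y) * (a • normMat Y)ᵀ = a ^ 2 • AMat Y := by
  rw [transpose_smul, Matrix.smul_mul, Matrix.mul_smul, smul_smul, sq, AMat]

end Centering

theorem stmt8_general (n k : ℕ) (Y Z : Matrix (Fin n) (Fin k) ℝ) :
    (∃ a : ℝ, 0 < a ∧ ∃ Q : Matrix (Fin k) (Fin k) ℝ, ∃ u : Fin k → ℝ,
        Qᵀ * Q = 1 ∧ Z = a • (Y * Q) + transMat u) ↔
      (∃ c : ℝ, 0 < c ∧ AMat Z = c • AMat Y) := by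
  simp only [exists_and_left, exists_eq_add_transMat_iff, normMat_smul_mul,
    exists_orthogonal_mul_eq_iff, smul_normMat_mul_transpose, ← AMat.eq_1]
  constructor
  · rintro ⟨a, ha, h⟩
    exact ⟨a ^ 2, by positivity, h.symm⟩
  · rintro ⟨c, hc, h⟩
    exact ⟨√c, Real.sqrt_pos.mpr hc, by rw [Real.sq_sqrt hc.le, h]⟩

theorem stmt8 (n k : ℕ) (Y Z : Matrix (Fin n) (Fin k) ℝ)
    (hY : normMat Y ≠ 0) (hZ : normMat Z ≠ 0) :
    (∃ a : ℝ, 0 < a ∧ ∃ Q : Matrix (Fin k) (Fin k) ℝ, ∃ u : Fin k → ℝ,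
        Qᵀ * Q = 1 ∧ Z = a • (Y * Q) + transMat u) ↔
      (∃ c : ℝ, 0 < c ∧ AMat Z = c • AMat Y) :=
  stmt8_general n k Y Z
end
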